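/- Consistency order 3 of the implicit 2-step scheme arising from the P1-spline time-upwind discretization: let M, A ∈ ℝ^{n×n} and let w : ℝ → ℝ^n be four times continuously differentiable and satisfy the linear ODE M w′(t) = A w(t) for all t (so that also M w″ = A w′ and M w‴ = A w″). Then for every compact interval J there is a constant C ≥ 0 such that for all t ∈ J and all sufficiently small Δt > 0: ‖ M( −(3/4) w(t−Δt) + w(t) − (1/4) w(t+Δt) ) − Δt · A( (1/3) w(t−Δt) + (1/3) w(t) − (1/6) w(t+Δt) ) ‖ ≤ C · Δt⁴. In particular, the linear multistep method M( −(3/4) w_{k−1} + w_k − (1/4) w_{k+1} ) = Δt · A( (1/3) w_{k−1} + (1/3) w_k − (1/6) w_{k+1} ) has consistency order 3. -/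
import Mathlib

open Set

section TaylorHelpers

variable {E : Type*} [NormedAddCommGroup E] [NormedSpace ℝ E]

private lemma my_iDW_eq {f : ℝ → E} {N : ℕ} (hf : ContDiff ℝ (N : ℕ∞) f) {s : Set ℝ}
    (hs : UniqueDiffOn ℝ s) {m : ℕ} (hm : m ≤ N) {x : ℝ} (hx : x ∈ s) :
    iteratedDerivWithin m f s x = iteratedDeriv m f x := by
  have h1 : HasFTaylorSeriesUpTo (N : ℕ∞) f (ftaylorSeries ℝ f) :=
    contDiff_iff_ftaylorSeries.mp hf
  have h2 : HasFTaylorSeriesUpToOn (N : ℕ∞) f (ftaylorSeries ℝ f) s := by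
    rw [← hasFTaylorSeriesUpToOn_univ_iff] at h1
    exact h1.mono (subset_univ s)
  have h3 := h2.eq_iteratedFDerivWithin_of_uniqueDiffOn (m := m)
    (by exact_mod_cast hm) hs hx
  rw [iteratedDerivWithin_eq_iteratedFDerivWithin, iteratedDeriv_eq_iteratedFDeriv, ← h3]
  rfl

private lemma my_taylor_right {f : ℝ → E} {m : ℕ} (hf : ContDiff ℝ ((m + 1 : ℕ) : ℕ∞) f)
    {t h C : ℝ} (hh : 0 < h)
    (hC : ∀ y ∈ Icc t (t + h), ‖iteratedDeriv (m + 1) f y‖ ≤ C) :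
    ‖f (t + h) - ∑ i ∈ Finset.range (m + 1),
        ((i.factorial : ℝ)⁻¹ * h ^ i) • iteratedDeriv i f t‖
      ≤ C * h ^ (m + 1) / m.factorial := by
  have hab : t ≤ t + h := by linarith
  have hlt : t < t + h := by linarith
  have hud := uniqueDiffOn_Icc hlt
  have hCb : ∀ y ∈ Icc t (t + h),
      ‖iteratedDerivWithin (m + 1) f (Icc t (t + h)) y‖ ≤ C := by
    intro y hy
    rw [my_iDW_eq hf hud le_rfl hy]
    exact hC y hy
  have := taylor_mean_remainder_bound (f := f) (n := m) hab
    (hf.contDiffOn) (right_mem_Icc.mpr hab) hCb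
  rw [taylor_within_apply] at this
  have hsum : ∀ i ∈ Finset.range (m + 1),
      ((i.factorial : ℝ)⁻¹ * (t + h - t) ^ i) • iteratedDerivWithin i f (Icc t (t + h)) t
        = ((i.factorial : ℝ)⁻¹ * h ^ i) • iteratedDeriv i f t := by
    intro i hi
    rw [my_iDW_eq hf hud (by have := Finset.mem_range.mp hi; omega : i ≤ m + 1)
      (left_mem_Icc.mpr hab)]
    ring_nf
  rw [Finset.sum_congr rfl hsum] at this
  simpa using this

private lemma my_taylor_left {f : ℝ → E} {m : ℕ} (hf : ContDiff ℝ ((m + 1 : ℕ) : ℕ∞) f)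
    {t h C : ℝ} (hh : 0 < h)
    (hC : ∀ y ∈ Icc (t - h) t, ‖iteratedDeriv (m + 1) f y‖ ≤ C) :
    ‖f (t - h) - ∑ i ∈ Finset.range (m + 1),
        ((i.factorial : ℝ)⁻¹ * (-h) ^ i) • iteratedDeriv i f t‖
      ≤ C * h ^ (m + 1) / m.factorial := by
  set g : ℝ → E := fun s => f (-s) with hg
  have hgc : ContDiff ℝ ((m + 1 : ℕ) : ℕ∞) g := hf.comp contDiff_neg
  have hCg : ∀ y ∈ Icc (-t) (-t + h), ‖iteratedDeriv (m + 1) g y‖ ≤ C := by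
    intro y hy
    rw [hg, iteratedDeriv_comp_neg, norm_smul]
    have : ‖(-1 : ℝ) ^ (m + 1)‖ = 1 := by
      rw [norm_pow, norm_neg, norm_one, one_pow]
    rw [this, one_mul]
    exact hC (-y) ⟨by linarith [hy.2], by linarith [hy.1]⟩
  have := my_taylor_right (f := g) hgc (t := -t) hh hCg
  have e1 : g (-t + h) = f (t - h) := by rw [hg]; ring_nf
  have e2 : ∀ i ∈ Finset.range (m + 1),
      ((i.factorial : ℝ)⁻¹ * h ^ i) • iteratedDeriv i g (-t)
        = ((i.factorial : ℝ)⁻¹ * (-h) ^ i) • iteratedDeriv i f t := by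
    intro i _
    rw [hg, iteratedDeriv_comp_neg, neg_neg, smul_smul]
    congr 1
    rw [neg_pow]
    ring
  rw [e1, Finset.sum_congr rfl e2] at this
  exact this

private lemma my_combo_bound {f : ℝ → E} (hf : ContDiff ℝ 4 f) (a b : ℝ) :
    ∃ C : ℝ, 0 ≤ C ∧ ∀ t ∈ Icc a b, ∀ h : ℝ, 0 < h → h ≤ 1 →
      ‖-(3 / 4 : ℝ) • f (t - h) + f t - (1 / 4 : ℝ) • f (t + h)
        - h • ((1 / 3 : ℝ) • deriv f (t - h) + (1 / 3 : ℝ) • deriv f t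
            - (1 / 6 : ℝ) • deriv f (t + h))‖ ≤ C * h ^ 4 := by
  have hf4 : ContDiff ℝ ((4 : ℕ) : ℕ∞) f := by exact_mod_cast hf
  have hf3' : ContDiff ℝ ((3 : ℕ) : ℕ∞) (deriv f) := by
    have : ContDiff ℝ ((3 : WithTop ℕ∞) + 1) f := by norm_num; exact_mod_cast hf
    exact_mod_cast (contDiff_succ_iff_deriv.mp this).2.2
  obtain ⟨D, hD⟩ := (isCompact_Icc (a := a - 1) (b := b + 1)).exists_bound_of_continuousOn
    ((hf.continuous_iteratedDeriv 4 (by norm_num)).continuousOn)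
  set D' := max D 0 with hD'
  have hD'0 : 0 ≤ D' := le_max_right _ _
  refine ⟨(5 / 12) * D', by positivity, ?_⟩
  intro t ht h hh0 hh1
  have hDK : ∀ y ∈ Icc (a - 1) (b + 1), ‖iteratedDeriv 4 f y‖ ≤ D' :=
    fun y hy => (hD y hy).trans (le_max_left _ _)
  have hRp := my_taylor_right (m := 3) hf4 hh0 (C := D') (t := t) (h := h)
    (fun y hy => hDK y ⟨by cases ht; cases hy; linarith, by cases ht; cases hy; linarith⟩)
  have hRm := my_taylor_left (m := 3) hf4 hh0 (C := D') (t := t) (h := h)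
    (fun y hy => hDK y ⟨by cases ht; cases hy; linarith, by cases ht; cases hy; linarith⟩)
  have hd3 : ∀ y, iteratedDeriv 3 (deriv f) y = iteratedDeriv 4 f y := by
    intro y; rw [← iteratedDeriv_succ']
  have hSp := my_taylor_right (m := 2) hf3' hh0 (C := D') (t := t) (h := h)
    (fun y hy => by
      rw [hd3]
      exact hDK y ⟨by cases ht; cases hy; linarith, by cases ht; cases hy; linarith⟩)
  have hSm := my_taylor_left (m := 2) hf3' hh0 (C := D') (t := t) (h := h)
    (fun y hy => by
      rw [hd3]
      exact hDK y ⟨by cases ht; cases hy; linarith, by cases ht; cases hy; linarith⟩)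
  set d0 := f t with hd0
  set d1 := iteratedDeriv 1 f t with hd1e
  set d2 := iteratedDeriv 2 f t with hd2e
  set d3 := iteratedDeriv 3 f t with hd3e
  set Rp := f (t + h) - ∑ i ∈ Finset.range 4,
      ((i.factorial : ℝ)⁻¹ * h ^ i) • iteratedDeriv i f t with hRpe
  set Rm := f (t - h) - ∑ i ∈ Finset.range 4,
      ((i.factorial : ℝ)⁻¹ * (-h) ^ i) • iteratedDeriv i f t with hRme
  set Sp := deriv f (t + h) - ∑ i ∈ Finset.range 3,
      ((i.factorial : ℝ)⁻¹ * h ^ i) • iteratedDeriv i (deriv f) t with hSpe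
  set Sm := deriv f (t - h) - ∑ i ∈ Finset.range 3,
      ((i.factorial : ℝ)⁻¹ * (-h) ^ i) • iteratedDeriv i (deriv f) t with hSme
  have hfp : f (t + h) = d0 + h • d1 + (h ^ 2 / 2) • d2 + (h ^ 3 / 6) • d3 + Rp := by
    rw [hRpe]
    simp [Finset.sum_range_succ, Nat.factorial, hd0, hd1e, hd2e, hd3e]
    module
  have hfm : f (t - h) = d0 - h • d1 + (h ^ 2 / 2) • d2 - (h ^ 3 / 6) • d3 + Rm := by
    rw [hRme]
    simp [Finset.sum_range_succ, Nat.factorial, hd0, hd1e, hd2e, hd3e]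
    module
  have hds : ∀ i, iteratedDeriv i (deriv f) t = iteratedDeriv (i + 1) f t := by
    intro i; rw [← iteratedDeriv_succ']
  have hgp : deriv f (t + h) = d1 + h • d2 + (h ^ 2 / 2) • d3 + Sp := by
    rw [hSpe]
    simp only [Finset.sum_range_succ, Finset.sum_range_zero, hds]
    simp [Nat.factorial, hd1e, hd2e, hd3e]
    module
  have hgm : deriv f (t - h) = d1 - h • d2 + (h ^ 2 / 2) • d3 + Sm := by
    rw [hSme]
    simp only [Finset.sum_range_succ, Finset.sum_range_zero, hds]
    simp [Nat.factorial, hd1e, hd2e, hd3e]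
    module
  have hft : deriv f t = d1 := by rw [hd1e, iteratedDeriv_one]
  have key : -(3 / 4 : ℝ) • f (t - h) + f t - (1 / 4 : ℝ) • f (t + h)
        - h • ((1 / 3 : ℝ) • deriv f (t - h) + (1 / 3 : ℝ) • deriv f t
            - (1 / 6 : ℝ) • deriv f (t + h))
      = (-(3 / 4 : ℝ)) • Rm + (-(1 / 4 : ℝ)) • Rp + (-(h / 3)) • Sm + (h / 6) • Sp := by
    rw [hfp, hfm, hgp, hgm, hft, ← hd0]
    module
  rw [key]
  have e1 : ‖(-(3 / 4 : ℝ)) • Rm‖ = 3 / 4 * ‖Rm‖ := by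
    rw [norm_smul]; norm_num
  have e2 : ‖(-(1 / 4 : ℝ)) • Rp‖ = 1 / 4 * ‖Rp‖ := by
    rw [norm_smul]; norm_num
  have e3 : ‖(-(h / 3)) • Sm‖ = h / 3 * ‖Sm‖ := by
    rw [norm_smul, Real.norm_eq_abs, abs_neg, abs_of_pos (by positivity : (0:ℝ) < h / 3)]
  have e4 : ‖(h / 6) • Sp‖ = h / 6 * ‖Sp‖ := by
    rw [norm_smul, Real.norm_eq_abs, abs_of_pos (by positivity : (0:ℝ) < h / 6)]
  have hn1 := norm_add_le ((-(3 / 4 : ℝ)) • Rm + (-(1 / 4 : ℝ)) • Rp + (-(h / 3)) • Sm)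
    ((h / 6) • Sp)
  have hn2 := norm_add_le ((-(3 / 4 : ℝ)) • Rm + (-(1 / 4 : ℝ)) • Rp) ((-(h / 3)) • Sm)
  have hn3 := norm_add_le ((-(3 / 4 : ℝ)) • Rm) ((-(1 / 4 : ℝ)) • Rp)
  rw [e1, e2, e3, e4] at *
  have hn : ‖(-(3 / 4 : ℝ)) • Rm + (-(1 / 4 : ℝ)) • Rp + (-(h / 3)) • Sm + (h / 6) • Sp‖
      ≤ 3 / 4 * ‖Rm‖ + 1 / 4 * ‖Rp‖ + h / 3 * ‖Sm‖ + h / 6 * ‖Sp‖ := by linarith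
  refine hn.trans ?_
  have h6 : ((3 : ℕ).factorial : ℝ) = 6 := by norm_num [Nat.factorial]
  have h2 : ((2 : ℕ).factorial : ℝ) = 2 := by norm_num [Nat.factorial]
  rw [h6] at hRp hRm
  rw [h2] at hSp hSm
  nlinarith [norm_nonneg Rm, norm_nonneg Rp, norm_nonneg Sm, norm_nonneg Sp,
    mul_le_mul_of_nonneg_left hSm (le_of_lt hh0),
    mul_le_mul_of_nonneg_left hSp (le_of_lt hh0)]

end TaylorHelpers

/-- **consistency order 3 of the implicit 2-step scheme arising from
the P1-spline time-upwind discretization.** If w is four times continuously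
differentiable and satisfies M w′ = A w, then on every compact interval the local
residual of the scheme
M(−(3/4) w_{k−1} + w_k − (1/4) w_{k+1}) = Δt·A((1/3) w_{k−1} + (1/3) w_k − (1/6) w_{k+1})
is bounded by C·Δt⁴ for all sufficiently small Δt > 0; i.e. the method has
consistency order 3. -/
theorem p1_spline_upwind_scheme_consistency_order_three
    (n : ℕ) (M A : Matrix (Fin n) (Fin n) ℝ)
    (w : ℝ → Fin n → ℝ) (hw : ContDiff ℝ 4 w)
    (hODE : ∀ t : ℝ, M.mulVec (deriv w t) = A.mulVec (w t)) :
    ∀ a b : ℝ, ∃ C : ℝ, 0 ≤ C ∧ ∃ δ : ℝ, 0 < δ ∧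
      ∀ t ∈ Set.Icc a b, ∀ Δt : ℝ, 0 < Δt → Δt ≤ δ →
        ‖M.mulVec (-(3 / 4 : ℝ) • w (t - Δt) + w t - (1 / 4 : ℝ) • w (t + Δt))
            - Δt • A.mulVec ((1 / 3 : ℝ) • w (t - Δt) + (1 / 3 : ℝ) • w t
                - (1 / 6 : ℝ) • w (t + Δt))‖
          ≤ C * Δt ^ 4 := by
  intro a b
  obtain ⟨C0, hC00, hcombo⟩ := my_combo_bound hw a b
  set L : (Fin n → ℝ) →L[ℝ] (Fin n → ℝ) :=
    LinearMap.toContinuousLinearMap (Matrix.mulVecLin M) with hL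
  refine ⟨‖L‖ * C0, by positivity, 1, one_pos, ?_⟩
  intro t ht Δt hΔ hδ
  have hAM : ∀ s : ℝ, A.mulVec (w s) = M.mulVec (deriv w s) := fun s => (hODE s).symm
  have veq : M.mulVec (-(3 / 4 : ℝ) • w (t - Δt) + w t - (1 / 4 : ℝ) • w (t + Δt))
        - Δt • A.mulVec ((1 / 3 : ℝ) • w (t - Δt) + (1 / 3 : ℝ) • w t
            - (1 / 6 : ℝ) • w (t + Δt))
      = M.mulVec (-(3 / 4 : ℝ) • w (t - Δt) + w t - (1 / 4 : ℝ) • w (t + Δt)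
          - Δt • ((1 / 3 : ℝ) • deriv w (t - Δt) + (1 / 3 : ℝ) • deriv w t
              - (1 / 6 : ℝ) • deriv w (t + Δt))) := by
    simp only [Matrix.mulVec_add, Matrix.mulVec_sub, Matrix.mulVec_smul, Matrix.mulVec_neg,
      hAM]
    try abel
  rw [veq]
  have hLv : ∀ v : Fin n → ℝ, M.mulVec v = L v := by
    intro v
    simp [hL]
  rw [hLv]
  calc ‖L (-(3 / 4 : ℝ) • w (t - Δt) + w t - (1 / 4 : ℝ) • w (t + Δt)
          - Δt • ((1 / 3 : ℝ) • deriv w (t - Δt) + (1 / 3 : ℝ) • deriv w t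
              - (1 / 6 : ℝ) • deriv w (t + Δt)))‖
      ≤ ‖L‖ * ‖-(3 / 4 : ℝ) • w (t - Δt) + w t - (1 / 4 : ℝ) • w (t + Δt)
          - Δt • ((1 / 3 : ℝ) • deriv w (t - Δt) + (1 / 3 : ℝ) • deriv w t
              - (1 / 6 : ℝ) • deriv w (t + Δt))‖ := L.le_opNorm _
    _ ≤ ‖L‖ * (C0 * Δt ^ 4) := by
        gcongr
        exact hcombo t ht Δt hΔ hδ
    _ = ‖L‖ * C0 * Δt ^ 4 := by ring
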